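/- Let N ≥ 1, K ≥ 2, and let (A_1, …, A_K) and (A'_1, …, A'_K) be ordered partitions of [0,N-1]. If A_i − A_j = A'_i − A'_j as multisets for all pairs i, j with 2 ≤ i, j ≤ K, then A_1 − A_1 = A'_1 − A'_1 as multisets. -/

import Mathlib

/-- The cyclic distance `d(i,j) = min(|i-j|, N-|i-j|)` on `ZMod N`. -/
def cdist {N : ℕ} (i j : ZMod N) : ℕ := min (i - j).val (j - i).val

/-- The cyclic difference multiset `A - B = {d(i,j) : i ∈ A, j ∈ B}`. -/
def diffMS {N : ℕ} (A B : Finset (ZMod N)) : Multiset ℕ :=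
  (A ×ˢ B).val.map fun p => cdist p.1 p.2

/-- The self difference multiset `A - A = {d(i,j) : i ≤ j ∈ A}`. -/
def selfDiffMS {N : ℕ} (A : Finset (ZMod N)) : Multiset ℕ :=
  ((A ×ˢ A).filter fun p => p.1.val ≤ p.2.val).val.map fun p => cdist p.1 p.2

/-- Two subsets are homometric if they have the same self difference multiset. -/
def Homometric {N : ℕ} (A B : Finset (ZMod N)) : Prop :=
  selfDiffMS A = selfDiffMS B

/-- `σ : ZMod N → ZMod N` is given by the action of an element of the dihedral
group `D_{2N}`, generated by the rotation `i ↦ i + 1` and the reflection `i ↦ -i`. -/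
def IsDihedral {N : ℕ} (σ : ZMod N → ZMod N) : Prop :=
  (∃ k : ZMod N, ∀ i, σ i = i + k) ∨ (∃ k : ZMod N, ∀ i, σ i = -i + k)

/-- Two subsets are equivalent if one is the image of the other under `D_{2N}`. -/
def EquivSets {N : ℕ} (A B : Finset (ZMod N)) : Prop :=
  ∃ σ : ZMod N → ZMod N, IsDihedral σ ∧ B = A.image σ

/-- An ordered partition of `[0, N-1]`: pairwise disjoint sets covering everything. -/
def IsPartitionOf {N K : ℕ} [NeZero N] (A : Fin K → Finset (ZMod N)) : Prop :=
  (∀ i j, i ≠ j → Disjoint (A i) (A j)) ∧ Finset.univ.biUnion A = Finset.univ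

/-- Two ordered partitions are homometric if `A i - A j = B i - B j` for all pairs. -/
def HomometricPart {N K : ℕ} (A B : Fin K → Finset (ZMod N)) : Prop :=
  ∀ i j, diffMS (A i) (A j) = diffMS (B i) (B j)

/-- Two ordered partitions are equivalent if a single dihedral element maps one to the other. -/
def EquivPart {N K : ℕ} (A B : Fin K → Finset (ZMod N)) : Prop :=
  ∃ σ : ZMod N → ZMod N, IsDihedral σ ∧ ∀ i, B i = (A i).image σ

/-- Two ordered partitions are pseudo-equivalent if each part is mapped by some
(possibly different) dihedral element. -/
def PseudoEquivPart {N K : ℕ} (A B : Fin K → Finset (ZMod N)) : Prop :=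
  ∀ i, ∃ σ : ZMod N → ZMod N, IsDihedral σ ∧ B i = (A i).image σ

/-- The periodic autocorrelation `a_x[ℓ] = ∑ x[n] x[n+ℓ]`. -/
noncomputable def autocorr {N : ℕ} [NeZero N] (x : ZMod N → ℝ) (ℓ : ZMod N) : ℝ :=
  ∑ n : ZMod N, x n * x (n + ℓ)

open Classical in
/-- The level set `{i : x[i] = a}` of a signal. -/
noncomputable def levelSet {N : ℕ} [NeZero N] (x : ZMod N → ℝ) (a : ℝ) : Finset (ZMod N) :=
  Finset.univ.filter fun i => x i = a

/-!
For a partition `A` of `ZMod N` and any set `C`, the multisets `A i - C` add up to `univ - C`,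
which by translation invariance of `cdist` is `|C|` copies of the distances from one point.
So `A k - C` is determined by the other `A i - C` and `|C|`. Applied with `C = A j` for `j ≠ 0`
and then with `C = A 0` (sizes are read off from `|A i - A i| = |A i|²` and `∑ |A i| = N`), this
gives `A 0 - A 0 = A' 0 - A' 0`. Finally, counting ordered pairs,
`2 • selfDiffMS A = diffMS A A + |A| • {0}`.
-/

namespace Multiset

theorem nsmul_right_injective_of_ne_zero {α : Type*} {n : ℕ} (hn : n ≠ 0) :
    Function.Injective fun s : Multiset α => n • s := by
  classical
  intro s t hst
  ext a
  have := congrArg (count a) hst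
  simp only [count_nsmul] at this
  exact Nat.eq_of_mul_eq_mul_left (Nat.pos_of_ne_zero hn) this

end Multiset

theorem Fintype.eq_of_sum_eq_of_forall_ne {ι M : Type*} [Fintype ι] [DecidableEq ι]
    [AddCancelCommMonoid M] {f g : ι → M} (k : ι) (hsum : ∑ i, f i = ∑ i, g i)
    (h : ∀ i, i ≠ k → f i = g i) : f k = g k := by
  rw [← Finset.add_sum_erase _ _ (Finset.mem_univ k),
    ← Finset.add_sum_erase _ _ (Finset.mem_univ k),
    Finset.sum_congr rfl fun i hi => h i (Finset.ne_of_mem_erase hi)] at hsum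
  exact add_right_cancel hsum

section CyclicDifferences

variable {N : ℕ}

theorem cdist_comm (i j : ZMod N) : cdist i j = cdist j i := min_comm _ _

@[simp]
theorem cdist_self (i : ZMod N) : cdist i i = 0 := by simp [cdist]

theorem cdist_sub_right (i j k : ZMod N) : cdist (i - k) (j - k) = cdist i j := by
  simp [cdist]

theorem diffMS_eq_sum (A B : Finset (ZMod N)) :
    diffMS A B = ∑ a ∈ A, ∑ b ∈ B, {cdist a b} := by
  rw [← Finset.sum_product', Finset.sum, diffMS, ← Multiset.sum_map_singleton
    (Multiset.map _ _), Multiset.map_map]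
  rfl

theorem card_diffMS (A B : Finset (ZMod N)) :
    Multiset.card (diffMS A B) = A.card * B.card := by
  rw [diffMS, Multiset.card_map, ← Finset.card_def, Finset.card_product]

theorem diffMS_comm (A B : Finset (ZMod N)) : diffMS A B = diffMS B A := by
  rw [diffMS_eq_sum, diffMS_eq_sum, Finset.sum_comm]
  exact Finset.sum_congr rfl fun _ _ => Finset.sum_congr rfl fun _ _ => by rw [cdist_comm]

theorem card_eq_of_diffMS_self_eq {A B : Finset (ZMod N)} (h : diffMS A A = diffMS B B) :
    A.card = B.card := by
  simpa only [card_diffMS, Nat.mul_self_inj] using congrArg Multiset.card h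

def distMS (N : ℕ) [NeZero N] : Multiset ℕ := ∑ a : ZMod N, {cdist a 0}

theorem diffMS_univ_left [NeZero N] (B : Finset (ZMod N)) :
    diffMS Finset.univ B = B.card • distMS N := by
  rw [diffMS_eq_sum, Finset.sum_comm, ← Finset.sum_const]
  refine Finset.sum_congr rfl fun b _ => ?_
  exact Fintype.sum_equiv (Equiv.subRight b) _ _ fun a => by
    rw [Equiv.subRight_apply, ← cdist_sub_right a b b, sub_self]

theorem two_nsmul_selfDiffMS [NeZero N] (A : Finset (ZMod N)) :
    2 • selfDiffMS A = diffMS A A + A.card • {0} := by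
  classical
  let f : ZMod N × ZMod N → Multiset ℕ := fun p => {cdist p.1 p.2}
  have hself : selfDiffMS A = ∑ p ∈ A ×ˢ A with p.1.val ≤ p.2.val, f p := by
    rw [selfDiffMS, ← Multiset.sum_map_singleton (Multiset.map _ _), Multiset.map_map]
    rfl
  have hdiff : diffMS A A = ∑ p ∈ A ×ˢ A, f p := by
    rw [diffMS_eq_sum, Finset.sum_product]
  have hswap :
      ∑ p ∈ A ×ˢ A with p.2.val ≤ p.1.val, f p = ∑ p ∈ A ×ˢ A with p.1.val ≤ p.2.val, f p :=
    Finset.sum_nbij' Prod.swap Prod.swap (by simp +contextual) (by simp +contextual)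
      (by simp) (by simp) fun p _ => by simp only [f, Prod.fst_swap, Prod.snd_swap, cdist_comm]
  have hunion : ((A ×ˢ A).filter fun p => p.1.val ≤ p.2.val) ∪
      (A ×ˢ A).filter (fun p => p.2.val ≤ p.1.val) = A ×ˢ A := by
    rw [← Finset.filter_or]
    exact Finset.filter_true_of_mem fun p _ => le_total _ _
  have hinter : ((A ×ˢ A).filter fun p => p.1.val ≤ p.2.val) ∩
      (A ×ˢ A).filter (fun p => p.2.val ≤ p.1.val) = A.diag := by
    rw [← Finset.filter_and]
    ext p
    simp only [Finset.mem_filter, Finset.mem_product, Finset.mem_diag, ← le_antisymm_iff,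
      (ZMod.val_injective N).eq_iff]
    constructor
    · rintro ⟨⟨h1, -⟩, h⟩
      exact ⟨h1, h⟩
    · rintro ⟨h1, h⟩
      exact ⟨⟨h1, h ▸ h1⟩, h⟩
  have hdiag : ∑ p ∈ A.diag, f p = A.card • {0} := by
    rw [Finset.sum_congr rfl (g := fun _ => {0}) fun p hp => by
      simp only [f, (Finset.mem_diag.mp hp).2, cdist_self], Finset.sum_const, Finset.diag_card]
  calc 2 • selfDiffMS A
      = ∑ p ∈ A ×ˢ A with p.1.val ≤ p.2.val, f p + ∑ p ∈ A ×ˢ A with p.2.val ≤ p.1.val, f p := by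
        rw [two_nsmul, hself, hswap]
    _ = diffMS A A + A.card • {0} := by
        rw [← Finset.sum_union_inter, hunion, hinter, hdiff, hdiag]

end CyclicDifferences

namespace IsPartitionOf

variable {N K : ℕ} [NeZero N] {A A' : Fin K → Finset (ZMod N)}

theorem sum_card (hA : IsPartitionOf A) : ∑ i, (A i).card = N := by
  classical
  rw [← Finset.card_biUnion fun i _ j _ hij => hA.1 i j hij, hA.2, Finset.card_univ, ZMod.card]

theorem sum_diffMS (hA : IsPartitionOf A) (C : Finset (ZMod N)) :
    ∑ i, diffMS (A i) C = diffMS Finset.univ C := by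
  classical
  simp only [diffMS_eq_sum]
  rw [← hA.2, Finset.sum_biUnion fun i _ j _ hij => hA.1 i j hij]

theorem card_eq_of_forall_ne (hA : IsPartitionOf A) (hA' : IsPartitionOf A') (k : Fin K)
    (h : ∀ i, i ≠ k → (A i).card = (A' i).card) : (A k).card = (A' k).card :=
  Fintype.eq_of_sum_eq_of_forall_ne k (hA.sum_card.trans hA'.sum_card.symm) h

theorem diffMS_eq_of_forall_ne (hA : IsPartitionOf A) (hA' : IsPartitionOf A') (k : Fin K)
    {C C' : Finset (ZMod N)} (hC : C.card = C'.card)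
    (h : ∀ i, i ≠ k → diffMS (A i) C = diffMS (A' i) C') : diffMS (A k) C = diffMS (A' k) C' := by
  refine Fintype.eq_of_sum_eq_of_forall_ne k ?_ h
  rw [hA.sum_diffMS, hA'.sum_diffMS, diffMS_univ_left, diffMS_univ_left, hC]

end IsPartitionOf

theorem first_parts_homometric_general (N K : ℕ) [NeZero N] [NeZero K]
    (A A' : Fin K → Finset (ZMod N)) (hA : IsPartitionOf A) (hA' : IsPartitionOf A')
    (h : ∀ i j : Fin K, i ≠ 0 → j ≠ 0 → diffMS (A i) (A j) = diffMS (A' i) (A' j)) :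
    selfDiffMS (A 0) = selfDiffMS (A' 0) := by
  have hcard : ∀ i, i ≠ 0 → (A i).card = (A' i).card := fun i hi =>
    card_eq_of_diffMS_self_eq (h i i hi hi)
  have hcross : ∀ j, j ≠ 0 → diffMS (A j) (A 0) = diffMS (A' j) (A' 0) := fun j hj => by
    rw [diffMS_comm, diffMS_comm (A' j)]
    exact hA.diffMS_eq_of_forall_ne hA' 0 (hcard j hj) fun i hi => h i j hi hj
  have hself : diffMS (A 0) (A 0) = diffMS (A' 0) (A' 0) :=
    hA.diffMS_eq_of_forall_ne hA' 0 (hA.card_eq_of_forall_ne hA' 0 hcard) hcross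
  apply Multiset.nsmul_right_injective_of_ne_zero two_ne_zero
  simp only [two_nsmul_selfDiffMS, hself, card_eq_of_diffMS_self_eq hself]

/-- if all difference multisets away from the first part agree,
then the first parts are homometric. -/
theorem first_parts_homometric (N K : ℕ) [NeZero N] [NeZero K] (hK : 2 ≤ K)
    (A A' : Fin K → Finset (ZMod N)) (hA : IsPartitionOf A) (hA' : IsPartitionOf A')
    (h : ∀ i j : Fin K, i ≠ 0 → j ≠ 0 → diffMS (A i) (A j) = diffMS (A' i) (A' j)) :
    selfDiffMS (A 0) = selfDiffMS (A' 0) :=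
  first_parts_homometric_general N K A A' hA hA' h
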